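/- arXiv:2605.07977 — 2 statements merged into one kernel-verified Lean document; each statement's English description precedes it below -/
import Mathlib

section
/- The bound -log(1-p) ≥ log p + h(μ) is tight: if μ < 1/2, equality holds at p = 1/2; if μ > 1/2, the infimum over p ∈ (μ,1) of (-log(1-p) - log p) equals h(μ) and is approached as p → μ⁺. -/
noncomputable def hConst (μ : ℝ) : ℝ :=
  if μ ≤ 1 / 2 then Real.log 4 else Real.log (1 / (μ * (1 - μ)))

theorem stmt4 (μ : ℝ) (hμ : μ ∈ Set.Ioo (0:ℝ) 1) :
    (μ < 1 / 2 → -Real.log (1 - (1/2 : ℝ)) = Real.log (1/2 : ℝ) + hConst μ) ∧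
    (1 / 2 < μ →
      IsGLB ((fun p : ℝ => -Real.log (1 - p) - Real.log p) '' Set.Ioo μ 1) (hConst μ) ∧
      Filter.Tendsto (fun p : ℝ => -Real.log (1 - p) - Real.log p)
        (nhdsWithin μ (Set.Ioi μ)) (nhds (hConst μ))) := by
  obtain ⟨hμ0, hμ1⟩ := hμ
  constructor
  · intro hlt
    rw [hConst, if_pos hlt.le]
    have h4 : (4:ℝ) = 2^2 := by norm_num
    rw [show (1:ℝ) - 1/2 = 1/2 by norm_num, Real.log_div one_ne_zero two_ne_zero,
      h4, Real.log_pow]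
    simp; ring
  · intro hgt
    have hμne : μ ≠ 0 := ne_of_gt hμ0
    have h1μ : (0:ℝ) < 1 - μ := by linarith
    have hC : hConst μ = -Real.log (1 - μ) - Real.log μ := by
      rw [hConst, if_neg (not_le.mpr hgt), one_div, Real.log_inv,
        Real.log_mul hμne (ne_of_gt h1μ)]
      ring
    have hcont : Filter.Tendsto (fun p : ℝ => -Real.log (1 - p) - Real.log p)
        (nhdsWithin μ (Set.Ioi μ)) (nhds (hConst μ)) := by
      rw [hC]
      apply Filter.Tendsto.mono_left _ nhdsWithin_le_nhds
      exact ((Real.continuousAt_log (ne_of_gt h1μ)).comp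
        (continuousAt_const.sub continuousAt_id)).neg.sub
        (Real.continuousAt_log hμne)
    refine ⟨⟨?_, ?_⟩, hcont⟩
    · rintro x ⟨p, ⟨hp1, hp2⟩, rfl⟩
      have hppos : (0:ℝ) < p := lt_trans hμ0 hp1
      have h1p : (0:ℝ) < 1 - p := by linarith
      rw [hC]
      have key : p * (1 - p) ≤ μ * (1 - μ) := by nlinarith
      have := Real.log_le_log (by positivity) key
      rw [Real.log_mul (ne_of_gt hppos) (ne_of_gt h1p),
        Real.log_mul hμne (ne_of_gt h1μ)] at this
      show -Real.log (1 - μ) - Real.log μ ≤ -Real.log (1 - p) - Real.log p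
      linarith
    · intro b hb
      have hne : (nhdsWithin μ (Set.Ioi μ)).NeBot := nhdsGT_neBot μ
      refine ge_of_tendsto hcont ?_
      filter_upwards [Ioo_mem_nhdsGT_of_mem (Set.mem_Ico.mpr ⟨le_refl μ, hμ1⟩)] with p hp
      exact hb ⟨p, hp, rfl⟩
end

section
/- (SPEAR Log-Probability Margin, tokenwise form) Let μ ∈ (0,1), λ_w, λ_l > 0, α > 0, ε ≥ 0. Let q_0,…,q_{T⁺-1} ∈ (0,1] with T⁺ ≥ 1 (win token probabilities) and p_1,…,p_m ∈ (μ,1) with m ≥ 1 (active lose token probabilities). Suppose λ_w·Σ_i(-log q_i) + λ_l·α·Σ_j(-log(1-p_j)) ≤ ε. Then (1/T⁺)·Σ_i log q_i - (1/m)·Σ_j log p_j ≥ h(μ) - ε·(1/(λ_w·T⁺) + 1/(λ_l·α·m)), where h(μ) = log 4 if μ ≤ 1/2 and h(μ) = log(1/(μ(1-μ))) otherwise. -/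
lemma tok_lemma (μ x : ℝ) (hμ : μ ∈ Set.Ioo (0:ℝ) 1) (hx : x ∈ Set.Ioo μ 1) :
    hConst μ + Real.log (1 - x) ≤ -Real.log x := by
  obtain ⟨hμ0, hμ1⟩ := hμ
  obtain ⟨hxμ, hx1⟩ := hx
  have hx0 : 0 < x := hμ0.trans hxμ
  have h1x : 0 < 1 - x := by linarith
  have key : ∀ c : ℝ, 0 < c → x * (1 - x) ≤ c →
      -Real.log c + Real.log (1 - x) ≤ -Real.log x := by
    intro c hc hle
    have hlog : Real.log (x * (1 - x)) ≤ Real.log c :=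
      Real.log_le_log (by positivity) hle
    rw [Real.log_mul hx0.ne' h1x.ne'] at hlog
    linarith
  unfold hConst
  split
  · have h4 : Real.log 4 = -Real.log ((1:ℝ)/4) := by
      rw [one_div, Real.log_inv, neg_neg]
    rw [h4]
    exact key (1/4) (by norm_num) (by nlinarith [sq_nonneg (x - 1/2)])
  · rename_i hμhalf
    push_neg at hμhalf
    rw [one_div, Real.log_inv]
    exact key (μ * (1 - μ)) (by nlinarith) (by nlinarith)

theorem stmt10 (μ lw ll α ε : ℝ) (hμ : μ ∈ Set.Ioo (0:ℝ) 1)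
    (hlw : 0 < lw) (hll : 0 < ll) (hα : 0 < α) (hε : 0 ≤ ε)
    (T m : ℕ) (hT : 1 ≤ T) (hm : 1 ≤ m)
    (q : Fin T → ℝ) (hq : ∀ i, q i ∈ Set.Ioc (0:ℝ) 1)
    (p : Fin m → ℝ) (hp : ∀ j, p j ∈ Set.Ioo μ 1)
    (h : lw * ∑ i, (-Real.log (q i)) + ll * α * ∑ j, (-Real.log (1 - p j)) ≤ ε) :
    (1 / (T : ℝ)) * ∑ i, Real.log (q i) - (1 / (m : ℝ)) * ∑ j, Real.log (p j)
      ≥ hConst μ - ε * (1 / (lw * T) + 1 / (ll * α * m)) := by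
  have hT0 : (0:ℝ) < T := by exact_mod_cast hT
  have hm0 : (0:ℝ) < m := by exact_mod_cast hm
  set A : ℝ := ∑ i, Real.log (q i) with hA
  set B : ℝ := ∑ j, Real.log (1 - p j) with hB
  set S : ℝ := ∑ j, Real.log (p j) with hS
  have hsum1 : ∑ i, (-Real.log (q i)) = -A := by rw [hA, Finset.sum_neg_distrib]
  have hsum2 : ∑ j, (-Real.log (1 - p j)) = -B := by rw [hB, Finset.sum_neg_distrib]
  rw [hsum1, hsum2] at h
  have hAle : A ≤ 0 := by
    rw [hA]
    apply Finset.sum_nonpos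
    intro i _
    exact Real.log_nonpos (hq i).1.le (hq i).2
  have hBle : B ≤ 0 := by
    rw [hB]
    apply Finset.sum_nonpos
    intro j _
    have := (hp j).1; have := (hp j).2; have hμ0 := hμ.1
    exact Real.log_nonpos (by linarith) (by linarith)
  have h1 : lw * (-A) ≤ ε := by
    nlinarith [mul_nonneg (mul_pos hll hα).le (neg_nonneg.mpr hBle)]
  have h2 : ll * α * (-B) ≤ ε := by
    nlinarith [mul_nonneg hlw.le (neg_nonneg.mpr hAle)]
  have hStot : (m : ℝ) * hConst μ + B ≤ -S := by
    have hsum := Finset.sum_le_sum (fun j (_ : j ∈ Finset.univ) =>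
      tok_lemma μ (p j) hμ (hp j))
    simp only [Finset.sum_add_distrib, Finset.sum_const, Finset.card_univ,
      Fintype.card_fin, nsmul_eq_mul, Finset.sum_neg_distrib] at hsum
    rw [hB, hS]
    linarith [hsum]
  -- key division facts
  have k1 : -(ε / (lw * T)) ≤ A / T := by
    rw [neg_div' , div_le_div_iff₀ (by positivity) hT0]
    nlinarith
  have k3 : -(ε / (ll * α * m)) ≤ B / m := by
    rw [neg_div', div_le_div_iff₀ (by positivity) hm0]
    nlinarith
  have k2 : hConst μ + B / m ≤ -S / m := by
    rw [← sub_nonneg]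
    have e : -S / m - (hConst μ + B / m) = (-S - ((m:ℝ) * hConst μ + B)) / m := by
      field_simp
    rw [e]
    exact div_nonneg (by linarith) hm0.le
  rw [ge_iff_le]
  have e1 : (1 / (T:ℝ)) * A = A / T := by ring
  have e2 : (1 / (m:ℝ)) * S = S / m := by ring
  have e3 : ε * (1 / (lw * T) + 1 / (ll * α * m)) = ε / (lw * T) + ε / (ll * α * m) := by
    ring
  rw [e1, e2, e3]
  have : -S / m = -(S / m) := by ring
  linarith [k1, k3, k2, this]
end
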